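/- The set of numbers in [0,1] that are simply normal in base b has full Lebesgue measure (Borel's normal number theorem, simple normality case). -/

import Mathlib

/-- The `k`-th digit (starting from `k = 0`) after the point in the base-`b`
expansion of the fractional part of `x`. -/
noncomputable def digit (b : ℕ) (x : ℝ) (k : ℕ) : ℕ :=
  (⌊Int.fract x * (b : ℝ) ^ (k + 1)⌋ % (b : ℤ)).toNat

/-- `x` is simply normal in base `b`: each digit `d < b` occurs with
asymptotic frequency `1 / b`. -/
def SimplyNormal (b : ℕ) (x : ℝ) : Prop :=
  ∀ d < b, Filter.Tendsto
    (fun N => (((Finset.range N).filter (fun k => digit b x k = d)).card : ℝ) / N)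
    Filter.atTop (nhds (1 / b))

/-- `x` is normal in base `b`: every nonempty finite block of base-`b` digits
of length `n` occurs in the base-`b` expansion of `x` with asymptotic
frequency `b⁻ⁿ`. -/
def IsNormal (b : ℕ) (x : ℝ) : Prop :=
  ∀ n : ℕ, 0 < n → ∀ w : Fin n → Fin b, Filter.Tendsto
    (fun N => (((Finset.range N).filter
        (fun k => ∀ i : Fin n, digit b x (k + i) = w i)).card : ℝ) / N)
    Filter.atTop (nhds (1 / (b : ℝ) ^ n))

open MeasureTheory ProbabilityTheory Filter Finset Set
open scoped ENNReal

namespace BorelAux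
open scoped Classical

variable {Ω : Type*} [MeasurableSpace Ω] {μ : MeasureTheory.Measure Ω}

lemma indicator_one_preimage (A : Set Ω) (s : Set ℝ) :
    A.indicator (fun _ => (1:ℝ)) ⁻¹' s =
      if (1:ℝ) ∈ s then (if (0:ℝ) ∈ s then Set.univ else A)
      else (if (0:ℝ) ∈ s then Aᶜ else ∅) := by
  ext x
  by_cases hx : x ∈ A <;> by_cases h1 : (1:ℝ) ∈ s <;> by_cases h0 : (0:ℝ) ∈ s <;>
    simp [Set.indicator_apply, hx, h1, h0]

lemma comap_indicator_le {A : Set Ω} :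
    MeasurableSpace.comap (A.indicator fun _ => (1:ℝ)) inferInstance ≤
      MeasurableSpace.generateFrom {A} := by
  rintro t ⟨s, -, rfl⟩
  rw [indicator_one_preimage]
  have hA : MeasurableSet[MeasurableSpace.generateFrom {A}] A :=
    MeasurableSpace.measurableSet_generateFrom rfl
  split_ifs
  exacts [@MeasurableSet.univ Ω (MeasurableSpace.generateFrom {A}), hA, hA.compl,
    @MeasurableSet.empty Ω (MeasurableSpace.generateFrom {A})]

lemma indepFun_indicator_one [IsProbabilityMeasure μ] {A B : Set Ω}
    (hA : MeasurableSet A) (hB : MeasurableSet B) (h : μ (A ∩ B) = μ A * μ B) :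
    ProbabilityTheory.IndepFun (A.indicator fun _ => (1:ℝ))
      (B.indicator fun _ => (1:ℝ)) μ := by
  have h1 : ProbabilityTheory.IndepSet A B μ :=
    (ProbabilityTheory.indepSet_iff_measure_inter_eq_mul hA hB μ).2 h
  have h2 : ProbabilityTheory.Indep (MeasurableSpace.generateFrom {A})
      (MeasurableSpace.generateFrom {B}) μ := h1
  exact ProbabilityTheory.indep_of_indep_of_le_left
    (ProbabilityTheory.indep_of_indep_of_le_right h2 comap_indicator_le) comap_indicator_le

lemma identDistrib_indicator_one [IsProbabilityMeasure μ] {A B : Set Ω}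
    (hA : MeasurableSet A) (hB : MeasurableSet B) (h : μ A = μ B) :
    ProbabilityTheory.IdentDistrib (A.indicator fun _ => (1:ℝ))
      (B.indicator fun _ => (1:ℝ)) μ μ := by
  have mA : Measurable (A.indicator fun _ => (1:ℝ)) := measurable_const.indicator hA
  have mB : Measurable (B.indicator fun _ => (1:ℝ)) := measurable_const.indicator hB
  refine ⟨mA.aemeasurable, mB.aemeasurable, ?_⟩
  ext s hs
  rw [MeasureTheory.Measure.map_apply mA hs, MeasureTheory.Measure.map_apply mB hs,
    indicator_one_preimage, indicator_one_preimage]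
  have hA' := measure_compl hA (measure_ne_top μ A)
  have hB' := measure_compl hB (measure_ne_top μ B)
  split_ifs <;> simp [h, hA', hB']

lemma card_filter_mod_div {A B : ℕ} (hA : 0 < A) (P Q : ℕ → Prop)
    [DecidablePred P] [DecidablePred Q] :
    ((Finset.range (A * B)).filter (fun m => P (m % A) ∧ Q (m / A))).card =
      ((Finset.range A).filter P).card * ((Finset.range B).filter Q).card := by
  rw [← Finset.card_product]
  refine Finset.card_nbij' (fun m => (m % A, m / A)) (fun p => p.1 + A * p.2) ?_ ?_ ?_ ?_
  · intro m hm
    simp only [Finset.mem_coe, Finset.mem_filter, Finset.mem_range, Finset.mem_product] at hm ⊢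
    exact ⟨⟨Nat.mod_lt _ hA, hm.2.1⟩,
      (Nat.div_lt_iff_lt_mul hA).2 (by rw [mul_comm]; exact hm.1), hm.2.2⟩
  · intro p hp
    simp only [Finset.mem_coe, Finset.mem_filter, Finset.mem_range, Finset.mem_product] at hp ⊢
    obtain ⟨⟨h1, hP⟩, h2, hQ⟩ := hp
    have hmod : (p.1 + A * p.2) % A = p.1 := by
      rw [Nat.add_mul_mod_self_left, Nat.mod_eq_of_lt h1]
    have hdiv : (p.1 + A * p.2) / A = p.2 := by
      rw [Nat.add_mul_div_left _ _ hA, Nat.div_eq_of_lt h1, zero_add]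
    refine ⟨?_, by rw [hmod]; exact hP, by rw [hdiv]; exact hQ⟩
    calc p.1 + A * p.2 < A + A * p.2 := by omega
      _ = A * (p.2 + 1) := by ring
      _ ≤ A * B := Nat.mul_le_mul_left _ h2
  · intro m _
    exact Nat.mod_add_div m A
  · intro p hp
    simp only [Finset.mem_coe, Finset.mem_filter, Finset.mem_range, Finset.mem_product] at hp
    have h1 := hp.1.1
    ext
    · simp [Nat.add_mul_mod_self_left, Nat.mod_eq_of_lt h1]
    · simp [Nat.add_mul_div_left _ _ hA, Nat.div_eq_of_lt h1]

lemma card_filter_mod_eq {b : ℕ} (hb : 0 < b) (s e : ℕ) (he : e < b) :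
    ((Finset.range (b ^ (s + 1))).filter (fun m => m % b = e)).card = b ^ s := by
  have hpow : b ^ (s + 1) = b * b ^ s := by ring
  rw [hpow]
  refine Eq.trans ?_ ((card_filter_mod_div (A := b) (B := b ^ s) hb (fun r => r = e) (fun _ => True)).trans ?_)
  · congr 1
    ext m
    simp only [Finset.mem_filter, Finset.mem_range]
    tauto
  · rw [Finset.filter_eq', if_pos (Finset.mem_range.2 he), Finset.card_singleton,
      Finset.filter_true_of_mem (fun _ _ => trivial), Finset.card_range, one_mul]

lemma digit_eq_natFloor (b : ℕ) (x : ℝ) (k : ℕ) :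
    digit b x k = ⌊Int.fract x * (b : ℝ) ^ (k + 1)⌋₊ % b := by
  have hy : 0 ≤ Int.fract x * (b : ℝ) ^ (k + 1) :=
    mul_nonneg (Int.fract_nonneg x) (by positivity)
  have h0 : 0 ≤ ⌊Int.fract x * (b : ℝ) ^ (k + 1)⌋ := Int.floor_nonneg.2 hy
  rw [digit, ← Int.floor_toNat]
  obtain ⟨n, hn⟩ := Int.eq_ofNat_of_zero_le h0
  rw [hn]
  norm_cast

lemma natFloor_digit_div {b : ℕ} (hb : 0 < b) (x : ℝ) {j k : ℕ} (hjk : j ≤ k) :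
    ⌊Int.fract x * (b : ℝ) ^ (j + 1)⌋₊ =
      ⌊Int.fract x * (b : ℝ) ^ (k + 1)⌋₊ / b ^ (k - j) := by
  rw [← Nat.floor_div_natCast]
  congr 1
  have hbne : ((b : ℝ)) ^ (k - j) ≠ 0 := pow_ne_zero _ (Nat.cast_ne_zero.2 hb.ne')
  have hpow : (b : ℝ) ^ (k + 1) = (b : ℝ) ^ (j + 1) * (b : ℝ) ^ (k - j) := by
    rw [← pow_add]
    congr 1
    omega
  push_cast
  rw [hpow]
  field_simp

lemma Ico_floor_eq_biUnion {N : ℕ} (hN : 0 < N) (p : ℕ → Prop) [DecidablePred p] :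
    {x : ℝ | x ∈ Set.Ico (0:ℝ) 1 ∧ p ⌊x * (N : ℝ)⌋₊} =
      ⋃ m ∈ (Finset.range N).filter p, Set.Ico ((m : ℝ) / N) ((m + 1) / N) := by
  have hN' : (0:ℝ) < N := Nat.cast_pos.2 hN
  ext x
  simp only [Set.mem_setOf_eq, Set.mem_Ico, Set.mem_iUnion, Finset.mem_filter,
    Finset.mem_range, exists_prop]
  constructor
  · rintro ⟨⟨hx0, hx1⟩, hp⟩
    have hxN : 0 ≤ x * N := by positivity
    refine ⟨⌊x * (N : ℝ)⌋₊, ⟨?_, hp⟩, ?_, ?_⟩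
    · exact (Nat.floor_lt hxN).2 (by nlinarith)
    · rw [div_le_iff₀ hN']
      exact Nat.floor_le hxN
    · rw [lt_div_iff₀ hN']
      have := Nat.lt_floor_add_one (x * (N : ℝ))
      push_cast
      linarith
  · rintro ⟨m, ⟨hmN, hp⟩, h1, h2⟩
    have hm1 : (m : ℝ) + 1 ≤ N := by exact_mod_cast Nat.succ_le_of_lt hmN
    have hx0 : 0 ≤ x := le_trans (by positivity) h1
    have hx1 : x < 1 := lt_of_lt_of_le h2 (by rw [div_le_one hN']; linarith)
    have hfloor : ⌊x * (N : ℝ)⌋₊ = m := by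
      rw [Nat.floor_eq_iff (by positivity)]
      constructor
      · rw [div_le_iff₀ hN'] at h1
        exact h1
      · rw [lt_div_iff₀ hN'] at h2
        push_cast
        linarith
    exact ⟨⟨hx0, hx1⟩, hfloor ▸ hp⟩

lemma volume_Ico_floor {N : ℕ} (hN : 0 < N) (p : ℕ → Prop) [DecidablePred p] :
    MeasureTheory.volume {x : ℝ | x ∈ Set.Ico (0:ℝ) 1 ∧ p ⌊x * (N : ℝ)⌋₊} =
      ENNReal.ofReal ((((Finset.range N).filter p).card : ℝ) / N) := by
  have hN' : (0:ℝ) < N := Nat.cast_pos.2 hN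
  have hdisj : ∀ a c : ℕ, a < c →
      Disjoint (Set.Ico ((a : ℝ) / N) ((a + 1) / N)) (Set.Ico ((c : ℝ) / N) ((c + 1) / N)) := by
    intro a c hac
    rw [Set.disjoint_left]
    rintro x ⟨-, hx2⟩ ⟨hx3, -⟩
    have hle : ((a : ℝ) + 1) / N ≤ (c : ℝ) / N := by
      gcongr
      exact_mod_cast hac
    linarith
  rw [Ico_floor_eq_biUnion hN p,
    measure_biUnion_finset ?_ (fun m _ => measurableSet_Ico)]
  · have hval : ∀ m ∈ (Finset.range N).filter p,
        MeasureTheory.volume (Set.Ico ((m : ℝ) / N) ((m + 1) / N)) = ENNReal.ofReal (1 / N) := by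
      intro m _
      rw [Real.volume_Ico]
      congr 1
      field_simp
      ring
    rw [Finset.sum_congr rfl hval, Finset.sum_const, nsmul_eq_mul,
      ← ENNReal.ofReal_natCast, ← ENNReal.ofReal_mul (by positivity)]
    congr 1
    field_simp
  · intro m hm n hn hmn
    rcases hmn.lt_or_gt with h | h
    · exact hdisj _ _ h
    · exact (hdisj _ _ h).symm

lemma mem_Ico_digit_eq {b : ℕ} (x : ℝ) (hx : x ∈ Set.Ico (0:ℝ) 1) (k : ℕ) :
    digit b x k = ⌊x * ((b ^ (k + 1) : ℕ) : ℝ)⌋₊ % b := by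
  rw [digit_eq_natFloor, Int.fract_eq_self.2 ⟨hx.1, hx.2⟩]
  norm_num

lemma mem_Ico_digit_eq_div {b : ℕ} (hb : 0 < b) (x : ℝ) (hx : x ∈ Set.Ico (0:ℝ) 1)
    {j k : ℕ} (hjk : j ≤ k) :
    digit b x j = ⌊x * ((b ^ (k + 1) : ℕ) : ℝ)⌋₊ / b ^ (k - j) % b := by
  rw [digit_eq_natFloor, natFloor_digit_div hb x hjk, Int.fract_eq_self.2 ⟨hx.1, hx.2⟩]
  congr 2
  push_cast
  ring

lemma volume_digit_single {b : ℕ} (hb : 0 < b) (k d : ℕ) (hd : d < b) :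
    MeasureTheory.volume ({x : ℝ | digit b x k = d} ∩ Set.Ico (0:ℝ) 1) =
      ENNReal.ofReal (1 / b) := by
  have hset : {x : ℝ | digit b x k = d} ∩ Set.Ico (0:ℝ) 1 =
      {x : ℝ | x ∈ Set.Ico (0:ℝ) 1 ∧ (fun m => m % b = d) ⌊x * ((b ^ (k + 1) : ℕ) : ℝ)⌋₊} := by
    ext x
    simp only [Set.mem_inter_iff, Set.mem_setOf_eq]
    constructor
    · rintro ⟨h1, h2⟩
      exact ⟨h2, by rw [← mem_Ico_digit_eq x h2 k]; exact h1⟩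
    · rintro ⟨h1, h2⟩
      exact ⟨by rw [mem_Ico_digit_eq x h1 k]; exact h2, h1⟩
  rw [hset, volume_Ico_floor (N := b ^ (k + 1)) (pow_pos hb _) (fun m => m % b = d),
    card_filter_mod_eq hb k d hd]
  congr 1
  have hbR : (0:ℝ) < b := Nat.cast_pos.2 hb
  push_cast
  rw [pow_succ]
  field_simp

lemma volume_digit_pair {b : ℕ} (hb : 0 < b) {j k : ℕ} (hjk : j < k) (d e : ℕ)
    (hd : d < b) (he : e < b) :
    MeasureTheory.volume (({x : ℝ | digit b x j = d} ∩ {x : ℝ | digit b x k = e})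
        ∩ Set.Ico (0:ℝ) 1) =
      ENNReal.ofReal (1 / b) * ENNReal.ofReal (1 / b) := by
  have hdvd : (b : ℕ) ∣ b ^ (k - j) := dvd_pow_self b (by omega)
  have hset : ({x : ℝ | digit b x j = d} ∩ {x : ℝ | digit b x k = e}) ∩ Set.Ico (0:ℝ) 1 =
      {x : ℝ | x ∈ Set.Ico (0:ℝ) 1 ∧
        (fun m => m / b ^ (k - j) % b = d ∧ m % b = e) ⌊x * ((b ^ (k + 1) : ℕ) : ℝ)⌋₊} := by
    ext x
    simp only [Set.mem_inter_iff, Set.mem_setOf_eq]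
    constructor
    · rintro ⟨⟨h1, h2⟩, h3⟩
      refine ⟨h3, ?_, ?_⟩
      · rw [← mem_Ico_digit_eq_div hb x h3 hjk.le]
        exact h1
      · rw [← mem_Ico_digit_eq x h3 k]
        exact h2
    · rintro ⟨h1, h2, h3⟩
      refine ⟨⟨?_, ?_⟩, h1⟩
      · rw [mem_Ico_digit_eq_div hb x h1 hjk.le]
        exact h2
      · rw [mem_Ico_digit_eq x h1 k]
        exact h3
  have hpow : b ^ (k + 1) = b ^ (k - j) * b ^ (j + 1) := by
    rw [← pow_add]
    congr 1
    omega
  have hcard : ((Finset.range (b ^ (k + 1))).filter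
      (fun m => m / b ^ (k - j) % b = d ∧ m % b = e)).card = b ^ (k - 1) := by
    rw [hpow]
    refine Eq.trans ?_ ((card_filter_mod_div (A := b ^ (k - j)) (B := b ^ (j + 1)) (pow_pos hb _)
      (fun r => r % b = e) (fun q => q % b = d)).trans ?_)
    · congr 1
      ext m
      simp only [Finset.mem_filter, Finset.mem_range]
      have hmm := Nat.mod_mod_of_dvd m hdvd
      constructor
      · rintro ⟨h1, h2, h3⟩
        exact ⟨h1, by rw [hmm]; exact h3, h2⟩
      · rintro ⟨h1, h2, h3⟩
        exact ⟨h1, h3, by rw [← hmm]; exact h2⟩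
    · have e1 : k - j = (k - j - 1) + 1 := by omega
      have c1 : ((Finset.range (b ^ (k - j))).filter (fun r => r % b = e)).card
          = b ^ (k - j - 1) := by
        rw [e1]
        exact card_filter_mod_eq hb _ e he
      have c2 : ((Finset.range (b ^ (j + 1))).filter (fun q => q % b = d)).card
          = b ^ j := card_filter_mod_eq hb _ d hd
      rw [c1, c2, ← pow_add]
      congr 1
      omega
  rw [hset, volume_Ico_floor (N := b ^ (k + 1)) (pow_pos hb _)
      (fun m => m / b ^ (k - j) % b = d ∧ m % b = e), hcard,
    ← ENNReal.ofReal_mul (by positivity)]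
  congr 1
  have hbR : (0:ℝ) < b := Nat.cast_pos.2 hb
  have hk1 : k + 1 = (k - 1) + 2 := by omega
  push_cast
  rw [hk1, pow_add]
  field_simp

end BorelAux

open BorelAux

theorem borel_simply_normal {b : ℕ} (hb : 2 ≤ b) :
    MeasureTheory.volume {x : ℝ | x ∈ Set.Icc (0:ℝ) 1 ∧ SimplyNormal b x} = 1 := by
  classical
  have hb0 : 0 < b := by omega
  set μ : Measure ℝ := volume.restrict (Set.Ico (0:ℝ) 1) with hμ
  have hprob : IsProbabilityMeasure μ := by
    constructor
    rw [hμ, Measure.restrict_apply_univ, Real.volume_Ico]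
    norm_num
  have hmeasA : ∀ k d : ℕ, MeasurableSet {x : ℝ | digit b x k = d} := by
    intro k d
    have h1 : Measurable fun x : ℝ => ⌊Int.fract x * ((b : ℝ)) ^ (k + 1)⌋ :=
      (measurable_fract.mul_const _).floor
    have hmdig : Measurable fun x : ℝ => digit b x k :=
      Measurable.comp (g := fun z : ℤ => (z % (b : ℤ)).toNat)
        measurable_from_top h1
    exact hmdig (measurableSet_singleton d)
  have hμA : ∀ k d : ℕ, d < b → μ {x : ℝ | digit b x k = d} = ENNReal.ofReal (1 / b) := by
    intro k d hd
    rw [hμ, Measure.restrict_apply (hmeasA k d)]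
    exact volume_digit_single hb0 k d hd
  have key : ∀ d : ℕ, ∀ᵐ x ∂μ, d < b → Filter.Tendsto
      (fun N => (((Finset.range N).filter (fun k => digit b x k = d)).card : ℝ) / N)
      Filter.atTop (nhds (1 / b)) := by
    intro d
    by_cases hd : d < b
    swap
    · filter_upwards with x hcon
      exact absurd hcon hd
    set X : ℕ → ℝ → ℝ := fun k => ({x : ℝ | digit b x k = d}).indicator (fun _ => 1) with hX
    have hint : Integrable (X 0) μ := (integrable_const 1).indicator (hmeasA 0 d)
    have hpair : ∀ j k : ℕ, j < k → IndepFun (X j) (X k) μ := by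
      intro j k hjk
      apply indepFun_indicator_one (hmeasA j d) (hmeasA k d)
      rw [hμ, Measure.restrict_apply ((hmeasA j d).inter (hmeasA k d))]
      rw [show volume.restrict (Set.Ico (0:ℝ) 1) {x : ℝ | digit b x j = d} = μ _ from rfl]
      rw [hμA j d hd, hμA k d hd]
      exact volume_digit_pair hb0 hjk d d hd hd
    have hindep : Pairwise (Function.onFun (IndepFun · · μ) X) := by
      intro j k hjk
      rcases hjk.lt_or_gt with h | h
      · exact hpair j k h
      · exact (hpair k j h).symm
    have hident : ∀ k, IdentDistrib (X k) (X 0) μ μ := fun k =>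
      identDistrib_indicator_one (hmeasA k d) (hmeasA 0 d)
        (by rw [hμA k d hd, hμA 0 d hd])
    have hSL := ProbabilityTheory.strong_law_ae_real X hint hindep hident
    have hmean : μ[X 0] = 1 / (b : ℝ) := by
      rw [hX]
      rw [MeasureTheory.integral_indicator_const (1:ℝ) (hmeasA 0 d), MeasureTheory.measureReal_def, hμA 0 d hd,
        ENNReal.toReal_ofReal (by positivity), smul_eq_mul, mul_one]
    rw [hmean] at hSL
    filter_upwards [hSL] with x hx _
    have hcards : (fun N => (((Finset.range N).filter (fun k => digit b x k = d)).card : ℝ) / N)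
        = fun n : ℕ => (∑ i ∈ Finset.range n, X i x) / n := by
      funext N
      congr 1
      simp [hX, Set.indicator_apply, Finset.sum_boole]
    rw [hcards]
    exact hx
  have main : ∀ᵐ x ∂μ, SimplyNormal b x := by
    have := MeasureTheory.ae_all_iff.2 key
    filter_upwards [this] with x hx
    exact hx
  rw [hμ, ae_restrict_iff' measurableSet_Ico] at main
  have hnull : volume {x : ℝ | ¬ (x ∈ Set.Ico (0:ℝ) 1 → SimplyNormal b x)} = 0 :=
    ae_iff.mp main
  set S : Set ℝ := {x : ℝ | x ∈ Set.Ico (0:ℝ) 1 → SimplyNormal b x} with hS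
  set T : Set ℝ := {x : ℝ | x ∈ Set.Icc (0:ℝ) 1 ∧ SimplyNormal b x} with hT
  have hScompl : Sᶜ = {x : ℝ | ¬ (x ∈ Set.Ico (0:ℝ) 1 → SimplyNormal b x)} := by
    rw [hS]
    ext x
    simp
  have h1 : (1 : ℝ≥0∞) ≤ volume T := by
    have hsub : Set.Ico (0:ℝ) 1 ∩ S ⊆ T := by
      rintro x ⟨hx1, hx2⟩
      exact ⟨Set.Ico_subset_Icc_self hx1, hx2 hx1⟩
    have hcover : Set.Ico (0:ℝ) 1 ⊆ (Set.Ico (0:ℝ) 1 ∩ S) ∪ Sᶜ := by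
      intro x hx
      by_cases hxS : x ∈ S
      · exact Or.inl ⟨hx, hxS⟩
      · exact Or.inr hxS
    calc (1 : ℝ≥0∞) = volume (Set.Ico (0:ℝ) 1) := by rw [Real.volume_Ico]; norm_num
      _ ≤ volume ((Set.Ico (0:ℝ) 1 ∩ S) ∪ Sᶜ) := measure_mono hcover
      _ ≤ volume (Set.Ico (0:ℝ) 1 ∩ S) + volume Sᶜ := measure_union_le _ _
      _ = volume (Set.Ico (0:ℝ) 1 ∩ S) := by rw [hScompl, hnull, add_zero]
      _ ≤ volume T := measure_mono hsub
  have h2 : volume T ≤ 1 := by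
    calc volume T ≤ volume (Set.Icc (0:ℝ) 1) := measure_mono (fun x hx => hx.1)
      _ = 1 := by rw [Real.volume_Icc]; norm_num
  exact le_antisymm h2 h1
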